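/- For any skew-symmetric matrices X, Y ∈ ℝ^{d×d}, the matrix exponential is 1-Lipschitz in Frobenius norm: ‖exp(X) − exp(Y)‖_F ≤ ‖X − Y‖_F. -/

import Mathlib

open MeasureTheory Matrix Real RealInnerProductSpace

noncomputable def frobNorm {d : ℕ} (A : Matrix (Fin d) (Fin d) ℝ) : ℝ :=
  Real.sqrt (∑ i, ∑ j, A i j ^ 2)

noncomputable def nuclearNorm {d : ℕ} (A : Matrix (Fin d) (Fin d) ℝ) : ℝ :=
  ∑ i, Real.sqrt ((show (Aᵀ * A).IsHermitian from Matrix.isHermitian_conjTranspose_mul_self A).eigenvalues i)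

/-- `μ` is the uniform (rotation-invariant) probability distribution on the unit
sphere `S^{d-1} ⊂ ℝ^d`. -/
def IsUniformOnSphere {d : ℕ} (μ : Measure (EuclideanSpace ℝ (Fin d))) : Prop :=
  IsProbabilityMeasure μ ∧ (∀ᵐ x ∂μ, ‖x‖ = 1) ∧
  ∀ Q : Matrix (Fin d) (Fin d) ℝ, Qᵀ * Q = 1 →
    Measure.map (fun x => Matrix.toEuclideanLin Q x) μ = μ

/-- The Beta function. -/
noncomputable def Beta (m n : ℝ) : ℝ := Real.Gamma m * Real.Gamma n / Real.Gamma (m + n)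

noncomputable def ptilde (d : ℕ) : ℝ :=
  (1 + Beta ((d : ℝ) - 1) (1/2) / Beta (((d : ℝ) - 1)/2) (1/2))⁻¹

def A2 : Matrix (Fin 2) (Fin 2) ℝ := !![0, -1; 1, 0]

noncomputable def rot2 (θ : ℝ) : Matrix (Fin 2) (Fin 2) ℝ :=
  !![Real.cos θ, -Real.sin θ; Real.sin θ, Real.cos θ]

/-!
For `f t = exp (t • X) * exp ((1 - t) • Y)` we have `f 1 - f 0 = exp X - exp Y` and
`f' t = exp (t • X) * (X - Y) * exp ((1 - t) • Y)`. For skew-adjoint `X`, `Y` the outer factors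
are unitary, so a unitarily invariant norm gives `‖f' t‖ = ‖X - Y‖`, and the mean value
inequality concludes. The Frobenius norm is unitarily invariant because
`‖A‖ ^ 2 = trace (Aᴴ * A)`.
-/

open NormedSpace

theorem hasDerivAt_exp_smul_mul_exp_one_sub_smul {𝔸 : Type*} [NormedRing 𝔸] [NormedAlgebra ℝ 𝔸]
    [CompleteSpace 𝔸] (X Y : 𝔸) (t : ℝ) :
    HasDerivAt (fun s : ℝ => exp (s • X) * exp ((1 - s) • Y))
      (exp (t • X) * (X - Y) * exp ((1 - t) • Y)) t := by
  have hY : HasDerivAt (fun s : ℝ => exp ((1 - s) • Y)) (-(Y * exp ((1 - t) • Y))) t := by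
    simpa [Function.comp_def] using
      (hasDerivAt_exp_smul_const' Y (1 - t)).scomp t ((hasDerivAt_id t).const_sub 1)
  refine ((hasDerivAt_exp_smul_const X t).mul hY).congr_deriv ?_
  noncomm_ring

theorem norm_exp_sub_exp_le_of_norm_unitary_mul_mul_le {𝔸 : Type*} [NormedRing 𝔸]
    [NormedAlgebra ℝ 𝔸] [CompleteSpace 𝔸] [StarRing 𝔸] [ContinuousStar 𝔸] [StarModule ℝ 𝔸]
    (hU : ∀ u ∈ unitary 𝔸, ∀ v ∈ unitary 𝔸, ∀ a : 𝔸, ‖u * a * v‖ ≤ ‖a‖)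
    {X Y : 𝔸} (hX : X ∈ skewAdjoint 𝔸) (hY : Y ∈ skewAdjoint 𝔸) :
    ‖exp X - exp Y‖ ≤ ‖X - Y‖ := by
  -- `exp` does not depend on the choice of `ℚ`-algebra structure; one is needed only to apply
  -- `exp_mem_unitary_of_mem_skewAdjoint`.
  let := NormedAlgebra.restrictScalars ℚ ℝ 𝔸
  have bound (t : ℝ) : ‖exp (t • X) * (X - Y) * exp ((1 - t) • Y)‖ ≤ ‖X - Y‖ :=
    hU _ (exp_mem_unitary_of_mem_skewAdjoint (skewAdjoint.smul_mem t hX)) _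
      (exp_mem_unitary_of_mem_skewAdjoint (skewAdjoint.smul_mem (1 - t) hY)) _
  simpa using norm_image_sub_le_of_norm_deriv_le_segment_01'
    (fun t _ => (hasDerivAt_exp_smul_mul_exp_one_sub_smul X Y t).hasDerivWithinAt)
    (fun t _ => bound t)

section Frobenius

open scoped Matrix.Norms.Frobenius

variable {𝕜 m n : Type*} [RCLike 𝕜] [Fintype m] [Fintype n]

theorem Matrix.frobenius_norm_sq_eq_trace (A : Matrix m n 𝕜) :
    ((‖A‖ ^ 2 : ℝ) : 𝕜) = trace (Aᴴ * A) := by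
  rw [frobenius_norm_def, ← Real.rpow_natCast, ← Real.rpow_mul (by positivity)]
  simp only [trace, diag_apply, mul_apply, conjTranspose_apply, RCLike.star_def, RCLike.conj_mul]
  rw [Finset.sum_comm]
  norm_num

theorem Matrix.frobenius_norm_unitary_mul [DecidableEq m] {U : Matrix m m 𝕜}
    (hU : U ∈ unitary (Matrix m m 𝕜)) (A : Matrix m n 𝕜) : ‖U * A‖ = ‖A‖ := by
  have h : ((‖U * A‖ ^ 2 : ℝ) : 𝕜) = ((‖A‖ ^ 2 : ℝ) : 𝕜) := by
    rw [frobenius_norm_sq_eq_trace, frobenius_norm_sq_eq_trace, conjTranspose_mul,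
      Matrix.mul_assoc, ← Matrix.mul_assoc Uᴴ, ← star_eq_conjTranspose,
      Unitary.star_mul_self_of_mem hU, Matrix.one_mul]
  exact (pow_left_inj₀ (norm_nonneg _) (norm_nonneg _) two_ne_zero).mp (RCLike.ofReal_injective h)

theorem Matrix.frobenius_norm_mul_unitary [DecidableEq n] (A : Matrix m n 𝕜) {U : Matrix n n 𝕜}
    (hU : U ∈ unitary (Matrix n n 𝕜)) : ‖A * U‖ = ‖A‖ := by
  rw [← frobenius_norm_conjTranspose, conjTranspose_mul, ← star_eq_conjTranspose,
    frobenius_norm_unitary_mul (Unitary.star_mem hU), frobenius_norm_conjTranspose]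

theorem Matrix.frobenius_norm_exp_sub_exp_le [DecidableEq n] {X Y : Matrix n n 𝕜}
    (hX : X ∈ skewAdjoint (Matrix n n 𝕜)) (hY : Y ∈ skewAdjoint (Matrix n n 𝕜)) :
    ‖exp X - exp Y‖ ≤ ‖X - Y‖ :=
  norm_exp_sub_exp_le_of_norm_unitary_mul_mul_le
    (fun _ hu _ hv a => by rw [frobenius_norm_mul_unitary _ hv, frobenius_norm_unitary_mul hu])
    hX hY

theorem Matrix.frobenius_norm_eq_sqrt (A : Matrix m n ℝ) : ‖A‖ = √(∑ i, ∑ j, A i j ^ 2) := by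
  simp [frobenius_norm_def, Real.sqrt_eq_rpow]

end Frobenius

theorem stmt9 {d : ℕ} (X Y : Matrix (Fin d) (Fin d) ℝ) (hX : Xᵀ = -X) (hY : Yᵀ = -Y) :
    frobNorm (NormedSpace.exp X - NormedSpace.exp Y) ≤ frobNorm (X - Y) := by
  have mem_skewAdjoint {A : Matrix (Fin d) (Fin d) ℝ} (hA : Aᵀ = -A) :
      A ∈ skewAdjoint (Matrix (Fin d) (Fin d) ℝ) := by
    rwa [skewAdjoint.mem_iff, star_eq_conjTranspose, conjTranspose_eq_transpose_of_trivial]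
  open scoped Matrix.Norms.Frobenius in
  simpa only [frobNorm, ← Matrix.frobenius_norm_eq_sqrt] using
    Matrix.frobenius_norm_exp_sub_exp_le (mem_skewAdjoint hX) (mem_skewAdjoint hY)
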